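/- arXiv:2107.02711 — 4 statements merged into one kernel-verified Lean document; each statement's English description precedes it below -/
import Mathlib

section
/- Consider the linear system F x = f where F ∈ ℝ^{k×k} has entries F_{i,i} = -(1-γ)/2 for i < k, F_{i,j} = C_A for j > i and i < k, F_{i,j} = 0 for j < i and i < k, and F_{k,j} = 1 for all j, and f = (0,...,0,1)ᵀ, with 0 ≤ γ < 1 and C_A > 0. Then the system has a unique solution α, and every coordinate of α is strictly positive. -/
theorem stmt_3 (k : ℕ) (hk : 0 < k) (γ C_A : ℝ) (hγ0 : 0 ≤ γ) (hγ1 : γ < 1) (hCA : 0 < C_A)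
    (F : Matrix (Fin k) (Fin k) ℝ) (f : Fin k → ℝ)
    (hF : ∀ i j : Fin k,
      F i j = if i.val = k - 1 then 1
              else if j = i then -(1 - γ) / 2
              else if i < j then C_A else 0)
    (hf : ∀ i : Fin k, f i = if i.val = k - 1 then 1 else 0) :
    (∃! α : Fin k → ℝ, F.mulVec α = f) ∧
      ∀ α : Fin k → ℝ, F.mulVec α = f → ∀ i, 0 < α i := by
  set a : ℝ := (1 - γ) / 2 with ha
  have ha0 : 0 < a := by rw [ha]; linarith
  set r : ℝ := (a + C_A) / a with hr
  have hr0 : 0 < r := by rw [hr]; exact div_pos (by linarith) ha0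
  set y : (Fin k → ℝ) → ℕ → ℝ := fun x n => if h : n < k then x ⟨n, h⟩ else 0 with hy
  set T : (Fin k → ℝ) → ℕ → ℝ := fun x n => ∑ m ∈ Finset.Ico n k, y x m with hT
  have hyx : ∀ (x : Fin k → ℝ) (i : Fin k), y x i.val = x i := by
    intro x i; simp [hy]
  have hTrec : ∀ (x : Fin k → ℝ) n, n < k → T x n = y x n + T x (n + 1) :=
    fun x n hn => Finset.sum_eq_sum_Ico_succ_bot hn (y x)
  have hTk : ∀ x : Fin k → ℝ, T x k = 0 := by intro x; simp [hT]
  have hFent : ∀ i j : Fin k, F i j =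
      if i.val = k - 1 then 1
      else if j.val = i.val then -a else if i.val < j.val then C_A else 0 := by
    intro i j
    rw [hF]
    rw [show -(1 - γ) / 2 = -a by rw [ha]; ring]
    simp only [Fin.ext_iff, Fin.lt_def]
  have hrow : ∀ (x : Fin k → ℝ) (i : Fin k), F.mulVec x i =
      if i.val = k - 1 then T x 0 else -a * x i + C_A * T x (i.val + 1) := by
    intro x i
    have step : F.mulVec x i = ∑ n ∈ Finset.range k,
        (if i.val = k - 1 then 1
         else if n = i.val then -a else if i.val < n then C_A else 0) * y x n := by
      rw [← Fin.sum_univ_eq_sum_range]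
      simp only [Matrix.mulVec, dotProduct]
      refine Finset.sum_congr rfl fun j _ => ?_
      rw [hFent, hyx]
    rw [step]
    by_cases hi : i.val = k - 1
    · simp only [hi, if_true, one_mul]
      rw [hT, Finset.range_eq_Ico]
    · simp only [hi, if_false]
      have hik : i.val + 1 ≤ k := i.isLt
      have split := Finset.sum_Ico_consecutive
        (f := fun n => (if n = i.val then -a else if i.val < n then C_A else 0) * y x n)
        (Nat.zero_le (i.val + 1)) hik
      rw [Finset.range_eq_Ico, ← split]
      have h1 : ∑ n ∈ Finset.Ico 0 (i.val + 1),
          (if n = i.val then -a else if i.val < n then C_A else 0) * y x n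
          = -a * y x i.val := by
        rw [Finset.sum_Ico_succ_top (Nat.zero_le _)]
        rw [Finset.sum_eq_zero, if_pos rfl, zero_add]
        intro n hn
        simp only [Finset.mem_Ico] at hn
        have hne : n ≠ i.val := by omega
        have hnl : ¬ i.val < n := by omega
        simp [hne, hnl]
      have h2 : ∑ n ∈ Finset.Ico (i.val + 1) k,
          (if n = i.val then -a else if i.val < n then C_A else 0) * y x n
          = C_A * T x (i.val + 1) := by
        rw [hT, Finset.mul_sum]
        refine Finset.sum_congr rfl fun n hn => ?_
        simp only [Finset.mem_Ico] at hn
        have h3 : n ≠ i.val := by omega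
        have h4 : i.val < n := by omega
        simp [h3, h4]
      rw [h1, h2, hyx]
  -- main structural lemma
  have hform : ∀ x : Fin k → ℝ,
      (∀ i : Fin k, i.val ≠ k - 1 → F.mulVec x i = 0) →
      T x 0 = r ^ (k - 1) * T x (k - 1) ∧
        ∀ i : Fin k, x i =
          (if i.val = k - 1 then 1 else C_A / a * r ^ (k - 1 - (i.val + 1))) * T x (k - 1) := by
    intro x hx
    have h2 : ∀ n, n < k - 1 → a * y x n = C_A * T x (n + 1) := by
      intro n hn
      have hnk : n < k := by omega
      have hne : ((⟨n, hnk⟩ : Fin k)).val ≠ k - 1 := by simp; omega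
      have hrn := hrow x ⟨n, hnk⟩
      rw [hx ⟨n, hnk⟩ hne, if_neg hne] at hrn
      have hv : y x n = x ⟨n, hnk⟩ := hyx x ⟨n, hnk⟩
      have hrn' : 0 = -a * x ⟨n, hnk⟩ + C_A * T x (n + 1) := hrn
      linear_combination a * hv + hrn'
    have hTstep : ∀ n, n < k - 1 → T x n = r * T x (n + 1) := by
      intro n hn
      have h := h2 n hn
      have hrecn := hTrec x n (by omega)
      have key : a * T x n = (a + C_A) * T x (n + 1) := by
        rw [hrecn, mul_add, h]; ring
      rw [hr, div_mul_eq_mul_div, eq_div_iff ha0.ne']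
      linear_combination key
    have hTd : ∀ d, d ≤ k - 1 → T x (k - 1 - d) = r ^ d * T x (k - 1) := by
      intro d
      induction d with
      | zero => intro _; simp
      | succ d ih =>
        intro hd
        have h1 : k - 1 - (d + 1) < k - 1 := by omega
        have h2' : k - 1 - (d + 1) + 1 = k - 1 - d := by omega
        rw [hTstep _ h1, h2', ih (by omega)]
        ring
    have hTlast : x ⟨k - 1, by omega⟩ = T x (k - 1) := by
      have hrec := hTrec x (k - 1) (by omega)
      rw [show k - 1 + 1 = k by omega, hTk, add_zero] at hrec
      rw [hrec]
      exact (hyx x ⟨k - 1, by omega⟩).symm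
    refine ⟨?_, ?_⟩
    · have := hTd (k - 1) le_rfl
      rwa [Nat.sub_self] at this
    · intro i
      by_cases hi : i.val = k - 1
      · rw [if_pos hi, one_mul]
        have hie : i = ⟨k - 1, by omega⟩ := Fin.ext hi
        rw [hie]; exact hTlast
      · rw [if_neg hi]
        have hlt : i.val < k - 1 := by have := i.isLt; omega
        have h := h2 i.val hlt
        rw [hyx] at h
        have hd : T x (i.val + 1) = r ^ (k - 1 - (i.val + 1)) * T x (k - 1) := by
          have := hTd (k - 1 - (i.val + 1)) (by omega)
          rwa [show k - 1 - (k - 1 - (i.val + 1)) = i.val + 1 by omega] at this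
        rw [hd] at h
        have hxi : x i = C_A * (r ^ (k - 1 - (i.val + 1)) * T x (k - 1)) / a := by
          rw [eq_div_iff ha0.ne']; linear_combination h
        rw [hxi]; ring
  have hzero : ∀ x : Fin k → ℝ, F.mulVec x = 0 → x = 0 := by
    intro x hx
    obtain ⟨hT0, hxi⟩ := hform x (fun i _ => by rw [hx]; rfl)
    have hT0' : T x 0 = 0 := by
      have h := hrow x ⟨k - 1, by omega⟩
      rw [hx] at h
      simpa using h.symm
    have hTl : T x (k - 1) = 0 := by
      have hrne : r ^ (k - 1) ≠ 0 := pow_ne_zero _ hr0.ne'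
      rw [hT0'] at hT0
      rcases mul_eq_zero.mp hT0.symm with h | h
      · exact absurd h hrne
      · exact h
    funext i
    rw [Pi.zero_apply, hxi i, hTl, mul_zero]
  have hinj : Function.Injective F.mulVec := by
    intro x x' hxx
    have h0 : F.mulVec (x - x') = 0 := by rw [Matrix.mulVec_sub, hxx, sub_self]
    exact sub_eq_zero.mp (hzero _ h0)
  have hsurj : Function.Surjective F.mulVec :=
    LinearMap.injective_iff_surjective.mp
      (show Function.Injective (Matrix.mulVecLin F) from hinj)
  have hpos : ∀ x : Fin k → ℝ, F.mulVec x = f → ∀ i, 0 < x i := by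
    intro x hx i
    obtain ⟨hT0, hxi⟩ := hform x (fun j hj => by rw [hx, hf, if_neg hj])
    have hT0' : T x 0 = 1 := by
      have h := hrow x ⟨k - 1, by omega⟩
      rw [hx, hf] at h
      simpa using h.symm
    have hTl : 0 < T x (k - 1) := by
      have hone : r ^ (k - 1) * T x (k - 1) = 1 := by rw [← hT0, hT0']
      nlinarith [pow_pos hr0 (k - 1)]
    rw [hxi i]
    have hc : 0 < (if i.val = k - 1 then (1:ℝ) else C_A / a * r ^ (k - 1 - (i.val + 1))) := by
      split_ifs
      · norm_num
      · have : 0 < C_A / a := div_pos hCA ha0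
        exact mul_pos this (pow_pos hr0 _)
    exact mul_pos hc hTl
  obtain ⟨α, hα⟩ := hsurj f
  exact ⟨⟨α, hα, fun x hx => hinj (hx.trans hα.symm)⟩, hpos⟩
end

section
/- (Deterministic recursion bound) Suppose a nonnegative sequence e_t satisfies (1 + 2β_t λ - 2β_t² C²) e_{t+1} ≤ (1 + 16 β_t² C²) e_t + 16 β_t² C² K for all t ≥ 0, with λ, C, K > 0, stepsizes β_t = 2/(λ(t + t₀ + 1)), and t₀ = 36C²/λ². Then e_T ≤ (1 + 16β₀²C²)(t₀+1)² e₀ / ((T+t₀-1)(T+t₀)) + 64 C² K / ((T+t₀) λ²) for all T ≥ 1. -/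
set_option maxHeartbeats 1000000 in
theorem stmt_11 (lam C K : ℝ) (hlam : 0 < lam) (hC : 0 < C) (hK : 0 < K)
    (t₀ : ℝ) (ht₀ : t₀ = 36 * C ^ 2 / lam ^ 2)
    (β : ℕ → ℝ) (hβ : ∀ t : ℕ, β t = 2 / (lam * (t + t₀ + 1)))
    (e : ℕ → ℝ) (he0 : ∀ t, 0 ≤ e t)
    (hrec : ∀ t : ℕ,
      (1 + 2 * β t * lam - 2 * (β t) ^ 2 * C ^ 2) * e (t + 1) ≤
        (1 + 16 * (β t) ^ 2 * C ^ 2) * e t + 16 * (β t) ^ 2 * C ^ 2 * K) :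
    ∀ T : ℕ, 1 ≤ T →
      e T ≤ (1 + 16 * (β 0) ^ 2 * C ^ 2) * (t₀ + 1) ^ 2 * e 0 /
              ((T + t₀ - 1) * (T + t₀)) +
            64 * C ^ 2 * K / ((T + t₀) * lam ^ 2) := by
  have hlam' : lam ≠ 0 := ne_of_gt hlam
  have hs : 0 < t₀ := by rw [ht₀]; positivity
  have hC2 : C ^ 2 = t₀ * lam ^ 2 / 36 := by rw [ht₀]; field_simp
  have key : ∀ t : ℕ,
      (9 * ((t : ℝ) + t₀ + 1) ^ 2 + 36 * ((t : ℝ) + t₀ + 1) - 2 * t₀) * e (t + 1) ≤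
        (9 * ((t : ℝ) + t₀ + 1) ^ 2 + 16 * t₀) * e t + 16 * t₀ * K := by
    intro t
    have ha : (0 : ℝ) < (t : ℝ) + t₀ + 1 := by positivity
    have ha' : ((t : ℝ) + t₀ + 1) ≠ 0 := ne_of_gt ha
    have h := hrec t
    have e1 : 1 + 2 * β t * lam - 2 * (β t) ^ 2 * C ^ 2
        = (9 * ((t : ℝ) + t₀ + 1) ^ 2 + 36 * ((t : ℝ) + t₀ + 1) - 2 * t₀)
            / (9 * ((t : ℝ) + t₀ + 1) ^ 2) := by
      rw [hβ t, hC2]; field_simp; ring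
    have e2 : 1 + 16 * (β t) ^ 2 * C ^ 2
        = (9 * ((t : ℝ) + t₀ + 1) ^ 2 + 16 * t₀) / (9 * ((t : ℝ) + t₀ + 1) ^ 2) := by
      rw [hβ t, hC2]; field_simp; ring
    have e3 : 16 * (β t) ^ 2 * C ^ 2 * K = (16 * t₀ * K) / (9 * ((t : ℝ) + t₀ + 1) ^ 2) := by
      rw [hβ t, hC2]; field_simp; ring
    rw [e1, e2, e3, div_mul_eq_mul_div, div_mul_eq_mul_div, ← add_div,
      div_le_div_iff₀ (by positivity) (by positivity)] at h
    exact le_of_mul_le_mul_right h (by positivity)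
  have Q : ∀ T : ℕ, 1 ≤ T →
      9 * ((T : ℝ) + t₀ - 1) * ((T : ℝ) + t₀) * e T ≤ (9 * (t₀ + 1) ^ 2 + 16 * t₀) * e 0 + 16 * t₀ * K * ((T : ℝ) + t₀ - 1) := by
    have hD0 : (0:ℝ) < 9 * t₀ ^ 2 + 52 * t₀ + 45 := by positivity
    have hD1 : (0:ℝ) < 9 * t₀ ^ 2 + 70 * t₀ + 108 := by positivity
    have hD2 : (0:ℝ) < 9 * t₀ ^ 2 + 88 * t₀ + 189 := by positivity
    have k0 := key 0
    have k1 := key 1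
    have k2 := key 2
    push_cast at k0 k1 k2
    have Q1 : 9 * ((1 : ℝ) + t₀ - 1) * ((1 : ℝ) + t₀) * e 1 ≤ (9 * (t₀ + 1) ^ 2 + 16 * t₀) * e 0 + 16 * t₀ * K * ((1 : ℝ) + t₀ - 1) := by
      have c3 := mul_le_mul_of_nonneg_left k0 (show (0:ℝ) ≤ 9 * t₀ * (t₀ + 1) by positivity)
      have c1 : (0:ℝ) ≤ (43 * t₀ + 45) * ((9 * (t₀ + 1) ^ 2 + 16 * t₀) * e 0) :=
        mul_nonneg (by positivity) (mul_nonneg (by positivity) (he0 0))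
      have c2 : (0:ℝ) ≤ (9 * t₀ ^ 2 + 43 * t₀ + 36) * (16 * t₀ ^ 2 * K) := by positivity
      have final : (9 * t₀ ^ 2 + 52 * t₀ + 45) * (9 * ((1 : ℝ) + t₀ - 1) * ((1 : ℝ) + t₀) * e 1)
          ≤ (9 * t₀ ^ 2 + 52 * t₀ + 45) * ((9 * (t₀ + 1) ^ 2 + 16 * t₀) * e 0 + 16 * t₀ * K * ((1 : ℝ) + t₀ - 1)) := by
        linarith [c1, c2, c3]
      exact le_of_mul_le_mul_left final hD0
    have Q2 : 9 * ((2 : ℝ) + t₀ - 1) * ((2 : ℝ) + t₀) * e 2 ≤ (9 * (t₀ + 1) ^ 2 + 16 * t₀) * e 0 + 16 * t₀ * K * ((2 : ℝ) + t₀ - 1) := by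
      have c3 := mul_le_mul_of_nonneg_left k1
        (show (0:ℝ) ≤ 9 * (t₀ + 1) * (t₀ + 2) * (9 * t₀ ^ 2 + 52 * t₀ + 45) by positivity)
      have c4 := mul_le_mul_of_nonneg_left k0
        (show (0:ℝ) ≤ 9 * (t₀ + 1) * (t₀ + 2) * (9 * t₀ ^ 2 + 52 * t₀ + 36) by positivity)
      have c1 : (0:ℝ) ≤ (387 * t₀ ^ 3 + 3127 * t₀ ^ 2 + 6858 * t₀ + 4212) * ((9 * (t₀ + 1) ^ 2 + 16 * t₀) * e 0) :=
        mul_nonneg (by positivity) (mul_nonneg (by positivity) (he0 0))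
      have c2 : (0:ℝ) ≤ (t₀ + 1) * (81 * t₀ ^ 4 + 936 * t₀ ^ 3 + 3757 * t₀ ^ 2 + 6165 * t₀ + 3402)
          * (16 * t₀ * K) := by positivity
      have final : ((9 * t₀ ^ 2 + 52 * t₀ + 45) * (9 * t₀ ^ 2 + 70 * t₀ + 108))
            * (9 * ((2 : ℝ) + t₀ - 1) * ((2 : ℝ) + t₀) * e 2)
          ≤ ((9 * t₀ ^ 2 + 52 * t₀ + 45) * (9 * t₀ ^ 2 + 70 * t₀ + 108))
            * ((9 * (t₀ + 1) ^ 2 + 16 * t₀) * e 0 + 16 * t₀ * K * ((2 : ℝ) + t₀ - 1)) := by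
        linarith [c1, c2, c3, c4]
      exact le_of_mul_le_mul_left final (mul_pos hD0 hD1)
    have Q3 : 9 * ((3 : ℝ) + t₀ - 1) * ((3 : ℝ) + t₀) * e 3 ≤ (9 * (t₀ + 1) ^ 2 + 16 * t₀) * e 0 + 16 * t₀ * K * ((3 : ℝ) + t₀ - 1) := by
      have c3 := mul_le_mul_of_nonneg_left k2
        (show (0:ℝ) ≤ 9 * (t₀ + 2) * (t₀ + 3) * ((9 * t₀ ^ 2 + 52 * t₀ + 45) * (9 * t₀ ^ 2 + 70 * t₀ + 108)) by positivity)
      have c4 := mul_le_mul_of_nonneg_left k1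
        (show (0:ℝ) ≤ 9 * (t₀ + 2) * (t₀ + 3) * ((9 * t₀ ^ 2 + 52 * t₀ + 45) * (9 * t₀ ^ 2 + 70 * t₀ + 81)) by positivity)
      have c5 := mul_le_mul_of_nonneg_left k0
        (show (0:ℝ) ≤ 9 * (t₀ + 2) * (t₀ + 3) * ((9 * t₀ ^ 2 + 52 * t₀ + 36) * (9 * t₀ ^ 2 + 70 * t₀ + 81)) by positivity)
      have c1 : (0:ℝ) ≤ (3483 * t₀ ^ 5 + 61065 * t₀ ^ 4 + 396847 * t₀ ^ 3 + 1180755 * t₀ ^ 2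
          + 1589706 * t₀ + 761076) * ((9 * (t₀ + 1) ^ 2 + 16 * t₀) * e 0) :=
        mul_nonneg (by positivity) (mul_nonneg (by positivity) (he0 0))
      have c2 : (0:ℝ) ≤ (t₀ + 2) * (729 * t₀ ^ 6 + 14823 * t₀ ^ 5 + 120879 * t₀ ^ 4
          + 508618 * t₀ ^ 3 + 1166553 * t₀ ^ 2 + 1364445 * t₀ + 610173) * (16 * t₀ * K) := by positivity
      have final : ((9 * t₀ ^ 2 + 52 * t₀ + 45) * (9 * t₀ ^ 2 + 70 * t₀ + 108) * (9 * t₀ ^ 2 + 88 * t₀ + 189))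
            * (9 * ((3 : ℝ) + t₀ - 1) * ((3 : ℝ) + t₀) * e 3)
          ≤ ((9 * t₀ ^ 2 + 52 * t₀ + 45) * (9 * t₀ ^ 2 + 70 * t₀ + 108) * (9 * t₀ ^ 2 + 88 * t₀ + 189))
            * ((9 * (t₀ + 1) ^ 2 + 16 * t₀) * e 0 + 16 * t₀ * K * ((3 : ℝ) + t₀ - 1)) := by
        linarith [c1, c2, c3, c4, c5]
      exact le_of_mul_le_mul_left final (mul_pos (mul_pos hD0 hD1) hD2)
    have step : ∀ n : ℕ, 3 ≤ n →
        9 * ((n : ℝ) + t₀ - 1) * ((n : ℝ) + t₀) * e n ≤ (9 * (t₀ + 1) ^ 2 + 16 * t₀) * e 0 + 16 * t₀ * K * ((n : ℝ) + t₀ - 1) →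
        9 * (((n : ℝ) + 1) + t₀ - 1) * (((n : ℝ) + 1) + t₀) * e (n + 1)
          ≤ (9 * (t₀ + 1) ^ 2 + 16 * t₀) * e 0 + 16 * t₀ * K * (((n : ℝ) + 1) + t₀ - 1) := by
      intro n hn IH
      have hn3 : (3:ℝ) ≤ (n:ℝ) := by exact_mod_cast hn
      have kn := key n
      have hx1 : (0:ℝ) < (n:ℝ) + t₀ - 1 := by linarith
      have hDpos : (0:ℝ) < 9 * ((n:ℝ) + t₀ + 1) ^ 2 + 36 * ((n:ℝ) + t₀ + 1) - 2 * t₀ := by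
        nlinarith [sq_nonneg ((n:ℝ) + t₀ + 1)]
      have hprod : (0:ℝ) ≤ 9 * ((n:ℝ) + t₀) * ((n:ℝ) + t₀ + 1) * ((n:ℝ) + t₀ - 1) :=
        mul_nonneg (by positivity) hx1.le
      have hint : (0:ℝ) ≤ ((n:ℝ) - 3) * ((n:ℝ) + t₀) :=
        mul_nonneg (by linarith) (by positivity)
      have h1 : (9 * ((n:ℝ) + t₀ + 1) ^ 2 + 16 * t₀) * ((n:ℝ) + t₀ + 1)
          ≤ (9 * ((n:ℝ) + t₀ + 1) ^ 2 + 36 * ((n:ℝ) + t₀ + 1) - 2 * t₀) * ((n:ℝ) + t₀ - 1) := by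
        nlinarith [hint, hs.le, hn3]
      have h2 : (9 * ((n:ℝ) + t₀ + 1) ^ 2 + 16 * t₀) * ((n:ℝ) + t₀ + 1) + 9 * ((n:ℝ) + t₀) * ((n:ℝ) + t₀ + 1)
          ≤ (9 * ((n:ℝ) + t₀ + 1) ^ 2 + 36 * ((n:ℝ) + t₀ + 1) - 2 * t₀) * ((n:ℝ) + t₀) := by
        nlinarith [hint, hs.le, hn3]
      have c3 := mul_le_mul_of_nonneg_left kn hprod
      have c4 := mul_le_mul_of_nonneg_left IH
        (show (0:ℝ) ≤ (9 * ((n:ℝ) + t₀ + 1) ^ 2 + 16 * t₀) * ((n:ℝ) + t₀ + 1) by positivity)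
      have c1 : (0:ℝ) ≤ ((9 * ((n:ℝ) + t₀ + 1) ^ 2 + 36 * ((n:ℝ) + t₀ + 1) - 2 * t₀) * ((n:ℝ) + t₀ - 1)
            - (9 * ((n:ℝ) + t₀ + 1) ^ 2 + 16 * t₀) * ((n:ℝ) + t₀ + 1)) * ((9 * (t₀ + 1) ^ 2 + 16 * t₀) * e 0) :=
        mul_nonneg (by linarith) (mul_nonneg (by positivity) (he0 0))
      have c2 : (0:ℝ) ≤ ((9 * ((n:ℝ) + t₀ + 1) ^ 2 + 36 * ((n:ℝ) + t₀ + 1) - 2 * t₀) * ((n:ℝ) + t₀)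
            - (9 * ((n:ℝ) + t₀ + 1) ^ 2 + 16 * t₀) * ((n:ℝ) + t₀ + 1)
            - 9 * ((n:ℝ) + t₀) * ((n:ℝ) + t₀ + 1)) * (16 * t₀ * K * ((n:ℝ) + t₀ - 1)) :=
        mul_nonneg (by linarith) (mul_nonneg (by positivity) hx1.le)
      have final : ((9 * ((n:ℝ) + t₀ + 1) ^ 2 + 36 * ((n:ℝ) + t₀ + 1) - 2 * t₀) * ((n:ℝ) + t₀ - 1))
            * (9 * (((n : ℝ) + 1) + t₀ - 1) * (((n:ℝ) + 1) + t₀) * e (n + 1))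
          ≤ ((9 * ((n:ℝ) + t₀ + 1) ^ 2 + 36 * ((n:ℝ) + t₀ + 1) - 2 * t₀) * ((n:ℝ) + t₀ - 1))
            * ((9 * (t₀ + 1) ^ 2 + 16 * t₀) * e 0 + 16 * t₀ * K * (((n:ℝ) + 1) + t₀ - 1)) := by
        linarith [c1, c2, c3, c4]
      exact le_of_mul_le_mul_left final (mul_pos hDpos hx1)
    have Qge3 : ∀ n : ℕ, 3 ≤ n →
        9 * ((n : ℝ) + t₀ - 1) * ((n : ℝ) + t₀) * e n ≤ (9 * (t₀ + 1) ^ 2 + 16 * t₀) * e 0 + 16 * t₀ * K * ((n : ℝ) + t₀ - 1) := by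
      intro n hn
      induction n, hn using Nat.le_induction with
      | base => push_cast; linarith [Q3]
      | succ m hm ih =>
        have := step m hm ih
        push_cast
        linarith [this]
    intro T hT
    by_cases h3 : 3 ≤ T
    · exact Qge3 T h3
    · have hT2 : T ≤ 2 := by omega
      interval_cases T
      · push_cast; linarith [Q1]
      · push_cast; linarith [Q2]
  intro T hT
  have hT1 : (1:ℝ) ≤ (T:ℝ) := by exact_mod_cast hT
  have hx1 : (0:ℝ) < (T:ℝ) + t₀ - 1 := by linarith
  have hx : (0:ℝ) < (T:ℝ) + t₀ := by linarith
  have heq : (1 + 16 * (β 0) ^ 2 * C ^ 2) * (t₀ + 1) ^ 2 * e 0 / (((T:ℝ) + t₀ - 1) * ((T:ℝ) + t₀))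
        + 64 * C ^ 2 * K / (((T:ℝ) + t₀) * lam ^ 2)
      = ((9 * (t₀ + 1) ^ 2 + 16 * t₀) * e 0 + 16 * t₀ * K * ((T:ℝ) + t₀ - 1)) / (9 * ((T:ℝ) + t₀ - 1) * ((T:ℝ) + t₀)) := by
    rw [hβ 0, hC2]
    push_cast
    field_simp
    ring
  rw [heq, le_div_iff₀ (by positivity)]
  linarith [Q T hT]
end

section
/- Let T be an operator on a normed space (V, ‖·‖) that is a γ_G-contraction with γ_G < 1, let G be its unique fixed point, let Γ be a linear projection operator onto a subspace F with ‖Γ v‖ ≤ ‖v‖ for all v, and suppose G* ∈ F is a fixed point of the composite Γ∘T, i.e., Γ(T(G*)) = G*. Then ‖G* - G‖ ≤ (1/(1 - γ_G)) ‖Γ(G) - G‖. -/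
theorem stmt_12 (V : Type*) [NormedAddCommGroup V] [NormedSpace ℝ V]
    (T : V → V) (γG : ℝ) (hγ0 : 0 ≤ γG) (hγ1 : γG < 1)
    (hT : ∀ u v : V, ‖T u - T v‖ ≤ γG * ‖u - v‖)
    (G : V) (hG : T G = G)
    (Γ : V →ₗ[ℝ] V) (hidem : Γ ∘ₗ Γ = Γ) (hnonexp : ∀ v, ‖Γ v‖ ≤ ‖v‖)
    (Gs : V) (hGs : Γ (T Gs) = Gs) :
    ‖Gs - G‖ ≤ (1 / (1 - γG)) * ‖Γ G - G‖ := by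
  have key : ‖Gs - G‖ ≤ γG * ‖Gs - G‖ + ‖Γ G - G‖ := by
    calc ‖Gs - G‖ = ‖(Γ (T Gs) - Γ G) + (Γ G - G)‖ := by
          rw [hGs, sub_add_sub_cancel]
      _ ≤ ‖Γ (T Gs) - Γ G‖ + ‖Γ G - G‖ := norm_add_le _ _
      _ = ‖Γ (T Gs - T G)‖ + ‖Γ G - G‖ := by rw [map_sub, hG]
      _ ≤ ‖T Gs - T G‖ + ‖Γ G - G‖ := by linarith [hnonexp (T Gs - T G)]
      _ ≤ γG * ‖Gs - G‖ + ‖Γ G - G‖ := by linarith [hT Gs G]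
  have h1 : 0 < 1 - γG := by linarith
  rw [div_mul_eq_mul_div, le_div_iff₀ h1]
  nlinarith [norm_nonneg (Gs - G)]
end

section
/- Let P be an irreducible row-stochastic matrix on a finite set X with stationary distribution μ (μ(x) > 0 for all x), and let Φ ∈ ℝ^{|X| × K} have linearly independent columns such that Φθ is not a nonzero constant vector for any θ (non-constant parameterization). Let U = diag(μ). Then the matrix A = Φᵀ(Pᵀ - I)UΦ is negative definite in the sense that θᵀAθ < 0 for all θ ≠ 0. -/
open Matrix
theorem stmt_13 (X : Type*) [Fintype X] [DecidableEq X] (K : ℕ)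
    (P : Matrix X X ℝ) (μ : X → ℝ)
    (hP0 : ∀ x y, 0 ≤ P x y) (hP1 : ∀ x, ∑ y, P x y = 1)
    (hirr : ∀ x y : X, ∃ m : ℕ, 0 < (P ^ m) x y)
    (hμ0 : ∀ x, 0 < μ x) (hμ1 : ∑ x, μ x = 1)
    (hstat : ∀ y, ∑ x, μ x * P x y = μ y)
    (Φ : Matrix X (Fin K) ℝ)
    (hcols : LinearIndependent ℝ Φ.transpose)
    (hnc : ∀ (θ : Fin K → ℝ) (c : ℝ), c ≠ 0 → Φ.mulVec θ ≠ fun _ => c) :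
    ∀ θ : Fin K → ℝ, θ ≠ 0 →
      θ ⬝ᵥ (Φ.transpose * (P.transpose - 1) * Matrix.diagonal μ * Φ).mulVec θ < 0 := by
  intro θ hθ
  set z : X → ℝ := Φ.mulVec θ with hz
  -- Step 1: express the quadratic form via z
  have hquad : θ ⬝ᵥ (Φ.transpose * (P.transpose - 1) * Matrix.diagonal μ * Φ).mulVec θ
      = (∑ x, ∑ y, μ x * P x y * z x * z y) - ∑ x, μ x * z x * z x := by
    have hA : (Φ.transpose * (P.transpose - 1) * Matrix.diagonal μ * Φ).mulVec θ
        = Φ.transpose.mulVec (((P.transpose - 1) * Matrix.diagonal μ).mulVec z) := by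
      rw [hz]
      simp only [← Matrix.mulVec_mulVec, Matrix.mul_assoc]
    rw [hA, dotProduct_mulVec, vecMul_transpose, ← hz]
    rw [← Matrix.mulVec_mulVec, Matrix.sub_mulVec, Matrix.one_mulVec, dotProduct_sub]
    congr 1
    · simp [dotProduct, mulVec, transpose_apply, diagonal, Finset.mul_sum]
      rw [Finset.sum_comm]
      exact Finset.sum_congr rfl fun x _ => Finset.sum_congr rfl fun y _ => by ring
    · simp [dotProduct, mulVec, diagonal, Finset.mul_sum]
      exact Finset.sum_congr rfl fun x _ => by ring
  -- Step 2: Dirichlet form identity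
  have e1 : ∑ x, μ x * z x * z x = ∑ x, ∑ y, μ x * P x y * (z x * z x) := by
    refine Finset.sum_congr rfl fun x _ => ?_
    have h : ∑ y, μ x * P x y * (z x * z x) = (∑ y, P x y) * (μ x * z x * z x) := by
      rw [Finset.sum_mul]
      exact Finset.sum_congr rfl fun y _ => by ring
    rw [h, hP1 x, one_mul]
  have e2 : ∑ x, μ x * z x * z x = ∑ x, ∑ y, μ x * P x y * (z y * z y) := by
    rw [Finset.sum_comm]
    refine Finset.sum_congr rfl fun y _ => ?_
    have h : ∑ x, μ x * P x y * (z y * z y) = (∑ x, μ x * P x y) * (z y * z y) := by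
      rw [Finset.sum_mul]
    rw [h, hstat y]
    ring
  have key : (∑ x, ∑ y, μ x * P x y * z x * z y) - ∑ x, μ x * z x * z x
      = -(1/2) * ∑ x, ∑ y, μ x * P x y * (z x - z y)^2 := by
    have expand : ∑ x, ∑ y, μ x * P x y * (z x - z y)^2
        = (∑ x, ∑ y, μ x * P x y * (z x * z x))
          + (∑ x, ∑ y, μ x * P x y * (z y * z y))
          - 2 * ∑ x, ∑ y, μ x * P x y * z x * z y := by
      rw [← Finset.sum_add_distrib, Finset.mul_sum, ← Finset.sum_sub_distrib]
      refine Finset.sum_congr rfl fun x _ => ?_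
      rw [← Finset.sum_add_distrib, Finset.mul_sum, ← Finset.sum_sub_distrib]
      exact Finset.sum_congr rfl fun y _ => by ring
    rw [expand, ← e1, ← e2]
    ring
  -- Step 3: positivity of the Dirichlet form
  have hterm : ∀ x y, 0 ≤ μ x * P x y * (z x - z y)^2 := fun x y =>
    mul_nonneg (mul_nonneg (hμ0 x).le (hP0 x y)) (sq_nonneg _)
  have hpow_nonneg : ∀ m (x y : X), 0 ≤ (P ^ m) x y := by
    intro m
    induction m with
    | zero => intro x y; rw [pow_zero, Matrix.one_apply]; split <;> norm_num
    | succ m ih =>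
        intro x y
        rw [pow_succ, Matrix.mul_apply]
        exact Finset.sum_nonneg fun k _ => mul_nonneg (ih x k) (hP0 k y)
  -- there is an edge with a strict difference
  have hpair : ∃ a b, 0 < P a b ∧ z a ≠ z b := by
    by_contra hcon
    push_neg at hcon
    have hconst : ∀ a b, 0 < P a b → z a = z b := fun a b h => hcon a b h
    have hchain : ∀ m (x y : X), 0 < (P ^ m) x y → z x = z y := by
      intro m
      induction m with
      | zero =>
          intro x y h
          rw [pow_zero, Matrix.one_apply] at h
          by_cases hxy : x = y
          · rw [hxy]
          · simp [hxy] at h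
      | succ m ih =>
          intro x y h
          rw [pow_succ, Matrix.mul_apply] at h
          have : ∃ k, 0 < (P ^ m) x k * P k y := by
            by_contra h'
            push_neg at h'
            have : ∑ k, (P ^ m) x k * P k y ≤ 0 :=
              Finset.sum_nonpos fun k _ => h' k
            linarith
          obtain ⟨k, hk⟩ := this
          rcases mul_pos_iff.mp hk with ⟨h1, h2⟩ | ⟨h1, _⟩
          · exact (ih x k h1).trans (hconst k y h2)
          · exact absurd h1 (not_lt.mpr (hpow_nonneg m x k))
    have hX : Nonempty X := by
      by_contra h
      rw [not_nonempty_iff] at h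
      rw [Finset.univ_eq_empty, Finset.sum_empty] at hμ1
      norm_num at hμ1
    obtain ⟨x0⟩ := hX
    have hzc : ∀ x, z x = z x0 := by
      intro x
      obtain ⟨m, hm⟩ := hirr x x0
      exact hchain m x x0 hm
    by_cases hc : z x0 = 0
    · -- z = 0, contradicting linear independence
      have h0 : ∑ k, θ k • Φ.transpose k = 0 := by
        funext x
        have hx : z x = 0 := (hzc x).trans hc
        simp only [Finset.sum_apply, Pi.smul_apply, transpose_apply, smul_eq_mul,
          Pi.zero_apply]
        rw [hz] at hx
        simpa [mulVec, dotProduct, mul_comm] using hx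
      exact hθ (funext fun k => Fintype.linearIndependent_iff.mp hcols θ h0 k)
    · exact hnc θ (z x0) hc (funext fun x => hzc x)
  obtain ⟨a, b, hab, hzab⟩ := hpair
  have hpos : 0 < ∑ x, ∑ y, μ x * P x y * (z x - z y)^2 := by
    refine Finset.sum_pos' (fun x _ => Finset.sum_nonneg fun y _ => hterm x y) ⟨a, Finset.mem_univ a, ?_⟩
    refine Finset.sum_pos' (fun y _ => hterm a y) ⟨b, Finset.mem_univ b, ?_⟩
    have hne : z a - z b ≠ 0 := sub_ne_zero.mpr hzab
    have : 0 < (z a - z b)^2 := by positivity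
    exact mul_pos (mul_pos (hμ0 a) hab) this
  linarith [hquad.trans key, hpos]
end
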